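/- Let N, K be positive integers with K ≤ N, λ > 0, q_n = (x_n, y_n) ∈ ℝ² for n = 1,…,N, and r_1,…,r_K ∈ ℝ². Let A ∈ ℂ^{N×K} be the steering matrix with AᴴA invertible and Π_A^⊥ = I_N − A(AᴴA)⁻¹Aᴴ. Fix k ∈ {1,…,K}, write x = (x_1,…,x_N), y = (y_1,…,y_N), and assume var(y) > 0 and Π_A^⊥ ȧ_v(r_k) ≠ 0. Then ‖Π_A^⊥ ȧ_u(r_k)‖₂² − (Re{ȧ_u(r_k)ᴴ Π_A^⊥ ȧ_v(r_k)})² / ‖Π_A^⊥ ȧ_v(r_k)‖₂² ≤ (4 N π² / λ²) · ( var(x) − cov(x,y)² / var(y) ). -/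
import Mathlib


open Matrix

noncomputable section

/-- Mean of a real vector. -/
def mean {N : ℕ} (x : Fin N → ℝ) : ℝ := (∑ n, x n) / N

/-- Variance of a real vector. -/
def variance {N : ℕ} (x : Fin N → ℝ) : ℝ := (∑ n, (x n - mean x) ^ 2) / N

/-- Covariance of two real vectors. -/
def covar {N : ℕ} (x y : Fin N → ℝ) : ℝ :=
  (∑ n, (x n - mean x) * (y n - mean y)) / N

/-- The squared ℓ²-norm of a complex vector. -/
def nsq {N : ℕ} (w : Fin N → ℂ) : ℝ := ∑ n, Complex.normSq (w n)

/-- The steering matrix `A ∈ ℂ^{N×K}` with entries `exp(i(2π/λ) qₙᵀ r_k)`. -/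
def steer {N K : ℕ} (lam : ℝ) (q : Fin N → ℝ × ℝ) (r : Fin K → ℝ × ℝ) :
    Matrix (Fin N) (Fin K) ℂ :=
  Matrix.of fun n k =>
    Complex.exp (Complex.I *
      ((2 * Real.pi / lam * ((q n).1 * (r k).1 + (q n).2 * (r k).2) : ℝ) : ℂ))

/-- The derivative `ȧ_u(r_k)` with entries `i(2π/λ) xₙ exp(i(2π/λ) qₙᵀ r_k)`. -/
def steerDuVec {N K : ℕ} (lam : ℝ) (q : Fin N → ℝ × ℝ) (r : Fin K → ℝ × ℝ)
    (k : Fin K) : Fin N → ℂ :=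
  fun n => Complex.I * ((2 * Real.pi / lam * (q n).1 : ℝ) : ℂ) * steer lam q r n k

/-- The derivative `ȧ_v(r_k)` with entries `i(2π/λ) yₙ exp(i(2π/λ) qₙᵀ r_k)`. -/
def steerDvVec {N K : ℕ} (lam : ℝ) (q : Fin N → ℝ × ℝ) (r : Fin K → ℝ × ℝ)
    (k : Fin K) : Fin N → ℂ :=
  fun n => Complex.I * ((2 * Real.pi / lam * (q n).2 : ℝ) : ℂ) * steer lam q r n k

/-- `Π_A^⊥ = I − A(AᴴA)⁻¹Aᴴ`. -/
def projPerp {N K : ℕ} (A : Matrix (Fin N) (Fin K) ℂ) : Matrix (Fin N) (Fin N) ℂ :=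
  1 - A * (Aᴴ * A)⁻¹ * Aᴴ

/- ### Auxiliary lemmas -/

lemma nsq_nonneg' {N : ℕ} (w : Fin N → ℂ) : 0 ≤ nsq w :=
  Finset.sum_nonneg fun _ _ => Complex.normSq_nonneg _

lemma nsq_pos' {N : ℕ} {w : Fin N → ℂ} (hw : w ≠ 0) : 0 < nsq w := by
  rcases lt_or_eq_of_le (nsq_nonneg' w) with h | h
  · exact h
  · exfalso; apply hw; funext n
    have := (Finset.sum_eq_zero_iff_of_nonneg
      (fun i _ => Complex.normSq_nonneg (w i))).1 h.symm n (Finset.mem_univ n)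
    simpa [Complex.normSq_eq_zero] using this

lemma nsq_re' {N : ℕ} (w : Fin N → ℂ) : nsq w = (star w ⬝ᵥ w).re := by
  simp [nsq, dotProduct, Complex.normSq_apply, Complex.mul_re]

lemma herm_dot' {N : ℕ} {M : Matrix (Fin N) (Fin N) ℂ} (hM : Mᴴ = M)
    (u w : Fin N → ℂ) : star (M.mulVec u) ⬝ᵥ w = star u ⬝ᵥ M.mulVec w := by
  rw [Matrix.star_mulVec, ← Matrix.dotProduct_mulVec, hM]

lemma nsq_sub' {N : ℕ} (p qv : Fin N → ℂ) (t : ℝ) :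
    nsq (fun n => p n - (t:ℂ) * qv n) =
      nsq p - 2 * t * (star p ⬝ᵥ qv).re + t ^ 2 * nsq qv := by
  simp only [nsq, dotProduct, Complex.re_sum, Finset.mul_sum, Finset.sum_mul,
    ← Finset.sum_add_distrib, ← Finset.sum_sub_distrib]
  apply Finset.sum_congr rfl
  intro n _
  simp [Complex.normSq_apply, Complex.mul_re, Complex.mul_im, Complex.sub_re, Complex.sub_im,
    Complex.ofReal_re, Complex.ofReal_im]
  ring

lemma projPerp_herm {N K : ℕ} (A : Matrix (Fin N) (Fin K) ℂ) :
    (projPerp A)ᴴ = projPerp A := by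
  simp [projPerp, conjTranspose_sub, conjTranspose_mul, Matrix.conjTranspose_nonsing_inv,
    Matrix.mul_assoc]

lemma projPerp_mul_self {N K : ℕ} (A : Matrix (Fin N) (Fin K) ℂ)
    (hA : IsUnit (Aᴴ * A).det) : projPerp A * A = 0 := by
  have h := Matrix.nonsing_inv_mul (Aᴴ * A) hA
  simp only [projPerp, Matrix.sub_mul, Matrix.one_mul]
  rw [Matrix.mul_assoc, Matrix.mul_assoc, h]
  simp

lemma projPerp_idem {N K : ℕ} (A : Matrix (Fin N) (Fin K) ℂ)
    (hA : IsUnit (Aᴴ * A).det) : projPerp A * projPerp A = projPerp A := by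
  nth_rewrite 2 [projPerp]
  rw [Matrix.mul_sub, Matrix.mul_one, ← Matrix.mul_assoc, ← Matrix.mul_assoc,
    projPerp_mul_self A hA]
  simp

lemma contract' {N K : ℕ} (A : Matrix (Fin N) (Fin K) ℂ)
    (hA : IsUnit (Aᴴ * A).det) (w : Fin N → ℂ) :
    nsq ((projPerp A).mulVec w) ≤ nsq w := by
  set Q := projPerp A with hQ
  have hre : (star w ⬝ᵥ Q.mulVec w).re = nsq (Q.mulVec w) := by
    rw [nsq_re', hQ, herm_dot' (projPerp_herm A), Matrix.mulVec_mulVec,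
      projPerp_idem A hA, ← hQ]
  have h2 := nsq_nonneg' (fun n => w n - ((1:ℝ):ℂ) * (Q.mulVec w) n)
  rw [nsq_sub', hre] at h2
  nlinarith [h2]

/-- The effective power of the sensitivity vector for the first angular coordinate of
target `k` is bounded above by `(4Nπ²/λ²)(var(x) − cov(x,y)²/var(y))`. -/
theorem stmt17 (N K : ℕ) (hN : 0 < N) (hK : 0 < K) (hKN : K ≤ N)
    (lam : ℝ) (hlam : 0 < lam)
    (q : Fin N → ℝ × ℝ) (r : Fin K → ℝ × ℝ)
    (hA : IsUnit ((steer lam q r)ᴴ * steer lam q r).det)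
    (k : Fin K)
    (hvy : 0 < variance (fun n => (q n).2))
    (hdv : (projPerp (steer lam q r)).mulVec (steerDvVec lam q r k) ≠ 0) :
    nsq ((projPerp (steer lam q r)).mulVec (steerDuVec lam q r k)) -
        ((star (steerDuVec lam q r k) ⬝ᵥ
            (projPerp (steer lam q r)).mulVec (steerDvVec lam q r k)).re) ^ 2 /
          nsq ((projPerp (steer lam q r)).mulVec (steerDvVec lam q r k)) ≤
      4 * N * Real.pi ^ 2 / lam ^ 2 *
        (variance (fun n => (q n).1) -
          covar (fun n => (q n).1) (fun n => (q n).2) ^ 2 /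
            variance (fun n => (q n).2)) := by
  set x : Fin N → ℝ := fun n => (q n).1 with hx
  set y : Fin N → ℝ := fun n => (q n).2 with hy
  set A := steer lam q r with hAd
  set P := projPerp A with hP
  set u := steerDuVec lam q r k with hu
  set v := steerDvVec lam q r k with hv
  set c : ℝ := 2 * Real.pi / lam with hc
  set t : ℝ := covar x y / variance y with ht
  set s : ℝ := mean x - t * mean y with hs
  set pu := P.mulVec u with hpu
  set pv := P.mulVec v with hpv
  have hQpos : 0 < nsq pv := nsq_pos' hdv
  set R : ℝ := (star u ⬝ᵥ pv).re with hR
  have hNne : (N:ℝ) ≠ 0 := Nat.cast_ne_zero.2 hN.ne'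
  have hlamne : lam ≠ 0 := hlam.ne'
  -- the key comparison vector
  set w : Fin N → ℂ :=
    fun n => Complex.I * ((c * (x n - t * y n - s) : ℝ) : ℂ) * A n k with hw
  -- ⟨pu, pv⟩.re = R
  have hRe : (star pu ⬝ᵥ pv).re = R := by
    rw [hpu, hpv, herm_dot' (projPerp_herm A), Matrix.mulVec_mulVec,
      projPerp_idem A hA, hR, hpv]
  -- P kills the k-th column of A
  have ha : P.mulVec (fun n => A n k) = 0 := by
    funext m
    have h1 : P.mulVec (fun n => A n k) m = (P * A) m k := by
      simp [Matrix.mulVec, Matrix.mul_apply, dotProduct]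
    rw [h1, projPerp_mul_self A hA]
    simp
  -- w as a linear combination
  have hwdef : w = u - (t:ℂ) • v - (Complex.I * ((c * s : ℝ) : ℂ)) • (fun n => A n k) := by
    funext n
    simp only [hw, hu, hv, steerDuVec, steerDvVec, Pi.sub_apply, Pi.smul_apply,
      smul_eq_mul, hc, hx, hy, hAd]
    push_cast
    ring
  have hPw : P.mulVec w = fun n => pu n - (t:ℂ) * pv n := by
    rw [hwdef, Matrix.mulVec_sub, Matrix.mulVec_sub, Matrix.mulVec_smul, Matrix.mulVec_smul, ha]
    funext n
    simp [hpu, hpv, smul_eq_mul]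
  -- the optimal-t bound
  have step1 : nsq pu - R ^ 2 / nsq pv ≤ nsq (fun n => pu n - (t:ℂ) * pv n) := by
    rw [nsq_sub', hRe]
    have h2 : 2 * t * R - t ^ 2 * nsq pv ≤ R ^ 2 / nsq pv := by
      rw [le_div_iff₀ hQpos]
      nlinarith [sq_nonneg (R - t * nsq pv)]
    linarith
  have step2 : nsq (fun n => pu n - (t:ℂ) * pv n) ≤ nsq w := by
    rw [← hPw]; exact contract' A hA w
  -- compute nsq w
  have hnsqw : nsq w = c ^ 2 * ∑ n, (x n - t * y n - s) ^ 2 := by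
    rw [nsq, Finset.mul_sum]
    apply Finset.sum_congr rfl
    intro n _
    rw [hw]
    rw [Complex.normSq_mul, Complex.normSq_mul]
    have he : Complex.normSq (A n k) = 1 := by
      simp [hAd, steer, Complex.normSq_eq_norm_sq, Complex.norm_exp, Complex.mul_re]
    rw [Complex.normSq_I, he, Complex.normSq_ofReal]
    ring
  -- the real-variance identity
  have hvarx : ∑ n, (x n - mean x) ^ 2 = N * variance x := by
    rw [variance]; field_simp
  have hvary : ∑ n, (y n - mean y) ^ 2 = N * variance y := by
    rw [variance]; field_simp
  have hcov : ∑ n, (x n - mean x) * (y n - mean y) = N * covar x y := by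
    rw [covar]; field_simp
  have hsum : ∑ n, (x n - t * y n - s) ^ 2 =
      N * (variance x - covar x y ^ 2 / variance y) := by
    have hpt : ∀ n, (x n - t * y n - s) ^ 2 =
        (x n - mean x) ^ 2 - 2 * t * ((x n - mean x) * (y n - mean y))
          + t ^ 2 * (y n - mean y) ^ 2 := by
      intro n; rw [hs]; ring
    calc ∑ n, (x n - t * y n - s) ^ 2
        = ∑ n, ((x n - mean x) ^ 2 - 2 * t * ((x n - mean x) * (y n - mean y))
            + t ^ 2 * (y n - mean y) ^ 2) := by
          exact Finset.sum_congr rfl fun n _ => hpt n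
      _ = (N * variance x) - 2 * t * (N * covar x y) + t ^ 2 * (N * variance y) := by
          rw [Finset.sum_add_distrib, Finset.sum_sub_distrib, ← Finset.mul_sum,
            ← Finset.mul_sum, hvarx, hcov, hvary]
      _ = N * (variance x - covar x y ^ 2 / variance y) := by
          rw [ht]; field_simp; ring
  have hfinal : nsq w = 4 * N * Real.pi ^ 2 / lam ^ 2 *
      (variance x - covar x y ^ 2 / variance y) := by
    rw [hnsqw, hsum, hc]
    field_simp
    ring
  calc nsq pu - R ^ 2 / nsq pv ≤ nsq (fun n => pu n - (t:ℂ) * pv n) := step1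
    _ ≤ nsq w := step2
    _ = _ := hfinal

end
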